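/- For every integer n ≥ 1, an n-chain x is perfect (i.e., s(x) = x) if and only if one of the following holds: (a) n = 4 and x = (1,2,1,0); (b) n = 4 and x = (2,0,2,0); (c) n = 5 and x = (2,1,2,0,0); (d) n ≥ 7 and x_0 = n−4, x_1 = 2, x_2 = 1, x_{n−4} = 1, and x_j = 0 for every other index j. -/

import Mathlib

/-!
Counting fibres gives `∑ i, x i = n` for a perfect chain. With `k = x 0`, which is positive
since `0` lies in its own fibre, exactly `k` entries vanish, so the `n - k - 1` nonzero entries at
positive indices sum to `n - k`: one of them is `2` and all others are `1`. The multiset of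
values is therefore `{k, 2, 1, …, 1, 0, …, 0}`, and perfection says that `x j` is the
multiplicity of `j` in it. Requiring this profile to have again a single entry `2` at a positive
index and entries `≤ 1` elsewhere leaves `k = 1, n = 4`, `k = 2, n ∈ {4, 5}` and `k = n - 4 ≥ 3`.
-/

/-- The counting operator: `countOp n x j` is the number of indices `i` with `x i = j`. -/
def countOp (n : ℕ) (x : Fin n → ℕ) : Fin n → ℕ :=
  fun j => (Finset.univ.filter fun i => x i = (j : ℕ)).card

open Finset

namespace Finset

variable {ι : Type*} {s : Finset ι} {f : ι → ℕ}

theorem exists_eq_two_of_sum_eq_card_filter_ne_zero_add_one [DecidableEq ι]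
    (h : ∑ i ∈ s, f i = #{i ∈ s | f i ≠ 0} + 1) :
    ∃ a ∈ s, f a = 2 ∧ ∀ i ∈ s, i ≠ a → f i ≤ 1 := by
  have hexcess : ∑ i ∈ s, (f i - 1) = 1 := by
    have : ∑ i ∈ s, f i = ∑ i ∈ s, (f i - 1) + #{i ∈ s | f i ≠ 0} := by
      rw [card_filter, ← sum_add_distrib]
      exact sum_congr rfl fun i _ => by split_ifs <;> omega
    omega
  obtain ⟨a, ha, ha1⟩ := exists_ne_zero_of_sum_ne_zero (hexcess.trans_ne one_ne_zero)
  have hsplit := add_sum_erase s (fun i => f i - 1) ha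
  refine ⟨a, ha, by omega, fun i hi hia => ?_⟩
  have hrest : ∑ i ∈ s.erase a, (f i - 1) = 0 := by omega
  have := sum_eq_zero_iff.mp hrest i (mem_erase.mpr ⟨hia, hi⟩)
  omega

theorem card_filter_eq_of_le_one (hf : ∀ i ∈ s, f i ≤ 1) (v : ℕ) :
    #{i ∈ s | f i = v} =
      if v = 0 then #s - ∑ i ∈ s, f i else if v = 1 then ∑ i ∈ s, f i else 0 := by
  have hzeros : #{i ∈ s | f i = 0} + ∑ i ∈ s, f i = #s := by
    rw [card_filter, ← sum_add_distrib, card_eq_sum_ones]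
    exact sum_congr rfl fun i hi => by have := hf i hi; split_ifs <;> omega
  have hones : #{i ∈ s | f i = 1} = ∑ i ∈ s, f i := by
    rw [card_filter]
    exact sum_congr rfl fun i hi => by have := hf i hi; split_ifs <;> omega
  split_ifs with h0 h1
  · subst h0; omega
  · subst h1; exact hones
  · rw [card_eq_zero, filter_eq_empty_iff]
    intro i hi
    have := hf i hi
    omega

end Finset

variable {n : ℕ} {x : Fin n → ℕ}

theorem sum_countOp (hx : ∀ i, x i < n) : ∑ j, countOp n x j = n := by
  have := card_eq_sum_card_fiberwise (f := fun i => (⟨x i, hx i⟩ : Fin n)) (s := univ)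
    (t := univ) (fun _ _ => mem_univ _)
  simpa [countOp, Fin.ext_iff] using this.symm

theorem countOp_eq_card_filter_add_of_le_one (T : Finset (Fin n)) (hT : ∀ i ∉ T, x i ≤ 1)
    (j : Fin n) :
    countOp n x j = #{i ∈ T | x i = j} +
      if (j : ℕ) = 0 then #Tᶜ - ∑ i ∈ Tᶜ, x i else if (j : ℕ) = 1 then ∑ i ∈ Tᶜ, x i else 0 := by
  rw [← card_filter_eq_of_le_one fun i hi => hT i (mem_compl.mp hi), countOp,
    card_filter, card_filter, card_filter, sum_add_sum_compl]

/-- The multiplicity of `j` in the multiset of `k`, `2`, `n - k - 2` ones and `k` zeros. -/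
def valueProfile (n k j : ℕ) : ℕ :=
  (if j = k then 1 else 0) + (if j = 2 then 1 else 0) +
    if j = 0 then k else if j = 1 then n - k - 2 else 0

theorem countOp_eq_valueProfile [NeZero n] {a : Fin n} (ha0 : a ≠ 0) (ha : x a = 2)
    (hle : ∀ i, i ≠ 0 → i ≠ a → x i ≤ 1) (hsum : ∑ i, x i = n) (j : Fin n) :
    countOp n x j = valueProfile n (x 0) j := by
  have hT : ∀ i ∉ ({0, a} : Finset (Fin n)), x i ≤ 1 := fun i hi => by
    simp only [mem_insert, mem_singleton, not_or] at hi
    exact hle i hi.1 hi.2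
  have hcompl : #({0, a} : Finset (Fin n))ᶜ = n - 2 := by
    rw [card_compl, card_pair ha0.symm, Fintype.card_fin]
  have hrest := sum_add_sum_compl {0, a} x
  rw [sum_pair ha0.symm, ha, hsum] at hrest
  rw [countOp_eq_card_filter_add_of_le_one _ hT, card_filter, sum_pair ha0.symm, hcompl, ha,
    valueProfile]
  split_ifs <;> omega

theorem shape_of_countOp_eq_self [NeZero n] (hx : ∀ i, x i < n) (h : countOp n x = x) :
    0 < x 0 ∧ x 0 + 2 ≤ n ∧ ∃ a ≠ 0, x a = 2 ∧ ∀ i, i ≠ 0 → i ≠ a → x i ≤ 1 := by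
  have hzeros : #{i | x i = 0} = x 0 := by
    have := congrFun h 0
    rwa [countOp, Fin.val_zero] at this
  have hk : 0 < x 0 := Nat.pos_of_ne_zero fun h0 => by
    have : 0 < #{i | x i = 0} := card_pos.mpr ⟨0, by simp [h0]⟩
    omega
  have hsum : ∑ i, x i = n := by simpa [h] using sum_countOp hx
  have hnonzero : #{i ∈ univ.erase 0 | x i ≠ 0} = n - x 0 - 1 := by
    have := card_filter_add_card_filter_not (s := univ) fun i => x i = 0
    rw [filter_erase, card_erase_of_mem (by simpa using hk.ne')]
    simp only [card_univ, Fintype.card_fin] at this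
    simp only [ne_eq]
    omega
  have hsum' := add_sum_erase univ x (mem_univ 0)
  obtain ⟨a, ha, ha2, hle⟩ := exists_eq_two_of_sum_eq_card_filter_ne_zero_add_one
    (s := univ.erase 0) (f := x) (by have := hx 0; omega)
  have : x a ≤ ∑ i ∈ univ.erase 0, x i := single_le_sum (fun _ _ => Nat.zero_le _) ha
  exact ⟨hk, by omega, a, ne_of_mem_erase ha, ha2,
    fun i hi0 hia => hle i (mem_erase.mpr ⟨hi0, mem_univ i⟩) hia⟩

theorem cases_of_eq_valueProfile [NeZero n] {k : ℕ} {a : Fin n} (hk : 0 < k) (hkn : k + 2 ≤ n)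
    (ha0 : a ≠ 0) (ha : x a = 2) (hle : ∀ i, i ≠ 0 → i ≠ a → x i ≤ 1)
    (hprof : ∀ j, x j = valueProfile n k j) :
    (k = 1 ∧ n = 4) ∨ (k = 2 ∧ (n = 4 ∨ n = 5)) ∨ (7 ≤ n ∧ k = n - 4) := by
  have ha0' : (a : ℕ) ≠ 0 := Fin.val_ne_zero_iff.mpr ha0
  have h1 := hle ⟨1, by omega⟩ (Fin.ne_of_val_ne (by rw [Fin.val_zero]; simp))
  have h2 := hle ⟨2, by omega⟩ (Fin.ne_of_val_ne (by rw [Fin.val_zero]; simp))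
  simp only [hprof, valueProfile, ne_eq, Fin.ext_iff] at ha h1 h2
  split_ifs at ha h1 h2 <;> omega

theorem countOp_eq_self_of_seven_le (hn : 7 ≤ n) (h : ∀ i : Fin n, x i =
    if (i : ℕ) = 0 then n - 4
    else if (i : ℕ) = 1 then 2
    else if (i : ℕ) = 2 then 1
    else if (i : ℕ) = n - 4 then 1
    else 0) :
    countOp n x = x := by
  have : NeZero n := ⟨by omega⟩
  have hsum : ∑ i, x i = n := by
    have hsplit (i : Fin n) : x i = (if i = ⟨0, by omega⟩ then n - 4 else 0) +
        (if i = ⟨1, by omega⟩ then 2 else 0) + (if i = ⟨2, by omega⟩ then 1 else 0) +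
        if i = ⟨n - 4, by omega⟩ then 1 else 0 := by
      rw [h]; simp only [Fin.ext_iff]; split_ifs <;> omega
    simp only [hsplit, sum_add_distrib, sum_ite_eq', mem_univ, if_true]
    omega
  funext j
  rw [countOp_eq_valueProfile (a := ⟨1, by omega⟩)
    (Fin.ne_of_val_ne (by rw [Fin.val_zero]; simp)) (by simp [h]) (fun i hi0 hi1 => ?_) hsum,
    h j, h 0, Fin.val_zero, valueProfile]
  · split_ifs <;> omega
  · have := Fin.val_ne_zero_iff.mpr hi0
    have := Fin.val_ne_iff.mpr hi1
    rw [h]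
    split_ifs <;> omega

theorem perfect_chains_classification (n : ℕ) (hn : 1 ≤ n) (x : Fin n → ℕ)
    (hx : ∀ i, x i < n) :
    countOp n x = x ↔
      ((n = 4 ∧ ∀ i : Fin n, x i = [1, 2, 1, 0].getD (i : ℕ) 0) ∨
       (n = 4 ∧ ∀ i : Fin n, x i = [2, 0, 2, 0].getD (i : ℕ) 0) ∨
       (n = 5 ∧ ∀ i : Fin n, x i = [2, 1, 2, 0, 0].getD (i : ℕ) 0) ∨
       (7 ≤ n ∧ ∀ i : Fin n, x i =
          if (i : ℕ) = 0 then n - 4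
          else if (i : ℕ) = 1 then 2
          else if (i : ℕ) = 2 then 1
          else if (i : ℕ) = n - 4 then 1
          else 0)) := by
  have : NeZero n := ⟨by omega⟩
  constructor
  · intro h
    have hsum : ∑ i, x i = n := by simpa [h] using sum_countOp hx
    obtain ⟨hk, hkn, a, ha0, ha, hle⟩ := shape_of_countOp_eq_self hx h
    have hprof (j : Fin n) : x j = valueProfile n (x 0) j := by
      rw [← countOp_eq_valueProfile ha0 ha hle hsum, h]
    generalize x 0 = k at hk hkn hprof
    rcases cases_of_eq_valueProfile hk hkn ha0 ha hle hprof with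
      ⟨rfl, rfl⟩ | ⟨rfl, rfl | rfl⟩ | ⟨hn7, rfl⟩
    · exact Or.inl ⟨rfl, fun i => by rw [hprof]; fin_cases i <;> rfl⟩
    · exact Or.inr <| Or.inl ⟨rfl, fun i => by rw [hprof]; fin_cases i <;> rfl⟩
    · exact Or.inr <| Or.inr <| Or.inl ⟨rfl, fun i => by rw [hprof]; fin_cases i <;> rfl⟩
    · refine Or.inr <| Or.inr <| Or.inr ⟨hn7, fun i => ?_⟩
      rw [hprof, valueProfile]
      split_ifs <;> omega
  · rintro (⟨rfl, h⟩ | ⟨rfl, h⟩ | ⟨rfl, h⟩ | ⟨hn7, h⟩)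
    · obtain rfl : x = _ := funext h; decide
    · obtain rfl : x = _ := funext h; decide
    · obtain rfl : x = _ := funext h; decide
    · exact countOp_eq_self_of_seven_le hn7 h
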